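/- arXiv:1809.08483 — 4 statements merged into one kernel-verified Lean document; each statement's English description precedes it below -/
import Mathlib

section
/- Let M be a symplectic matroid with bases B and circuits C (minimal admissible sets contained in no basis). Let B ∈ B and x ∉ B with B ∪ {x} admissible. Then B ∪ {x} contains a unique circuit C, and C = {x} ∪ {b ∈ B : B ∪ {x} − {b} ∈ B}. -/
open Finset

/-- The ground set `E_{±n} = [n] ∪ [n]*`, where `(i, false)` denotes `i`
and `(i, true)` denotes `i*`. -/
abbrev EE (n : ℕ) := Fin n × Bool

/-- The involution `* : E_{±n} → E_{±n}`. -/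
def estar {n : ℕ} (x : EE n) : EE n := (x.1, !x.2)

/-- `S* = {x* : x ∈ S}`. -/
def starSet {n : ℕ} (S : Finset (EE n)) : Finset (EE n) := S.image estar

/-- A set is admissible if `S ∩ S* = ∅`. -/
def Admissible {n : ℕ} (S : Finset (EE n)) : Prop := Disjoint S (starSet S)

/-- An admissible ordering of `E_{±n}`, encoded by an injective rank function `w`
such that `x < y` implies `y* < x*`. -/
structure AdmOrdering (n : ℕ) where
  w : EE n → ℕ
  inj : Function.Injective w
  rev : ∀ x y, w x < w y → w (estar y) < w (estar x)

/-- The induced (componentwise) partial order on subsets: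
compare the sorted lists of ranks entrywise. -/
def setLE {n : ℕ} (o : AdmOrdering n) (A B : Finset (EE n)) : Prop :=
  List.Forall₂ (· ≤ ·) (Finset.sort (A.image o.w) (· ≤ ·)) (Finset.sort (B.image o.w) (· ≤ ·))

/-- The Maximality Property: for every admissible ordering, the family has a
unique maximal member in the induced partial order. -/
def HasUniqueMaximal {n : ℕ} (𝓑 : Set (Finset (EE n))) : Prop :=
  ∀ o : AdmOrdering n, ∃! M, M ∈ 𝓑 ∧ ∀ S ∈ 𝓑, setLE o M S → M = S

/-- A symplectic matroid: a nonempty family of equinumerous admissible subsets of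
`E_{±n}` with a unique maximal member under every admissible ordering. -/
def IsSymplecticMatroid {n : ℕ} (𝓑 : Set (Finset (EE n))) : Prop :=
  𝓑.Nonempty ∧ (∀ S ∈ 𝓑, Admissible S) ∧ (∀ S ∈ 𝓑, ∀ T ∈ 𝓑, S.card = T.card) ∧
    HasUniqueMaximal 𝓑

/-- The circuits of a family of bases: minimal admissible subsets of `E_{±n}`
contained in no member of `𝓑`. -/
def Circuits {n : ℕ} (𝓑 : Set (Finset (EE n))) : Set (Finset (EE n)) :=
  {C | Admissible C ∧ (∀ B ∈ 𝓑, ¬ C ⊆ B) ∧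
    ∀ D ⊂ C, Admissible D → ∃ B ∈ 𝓑, D ⊆ B}

/-- The bases determined by a circuit family: maximal admissible subsets of
`E_{±n}` containing no member of `𝓒`. -/
def BasesOf {n : ℕ} (𝓒 : Set (Finset (EE n))) : Set (Finset (EE n)) :=
  {B | Admissible B ∧ (∀ C ∈ 𝓒, ¬ C ⊆ B) ∧
    ∀ D, B ⊂ D → Admissible D → ∃ C ∈ 𝓒, C ⊆ D}

/-- `P` spans `x` if some `J ∈ 𝓒` has `J − P = {x}`. -/
def Spans {n : ℕ} (𝓒 : Set (Finset (EE n))) (P : Finset (EE n)) (x : EE n) : Prop :=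
  ∃ J ∈ 𝓒, J \ P = {x}

/-- Axiom (SC1). -/
def SC1 {n : ℕ} (𝓒 : Set (Finset (EE n))) : Prop := ∅ ∉ 𝓒

/-- Axiom (SC2). -/
def SC2 {n : ℕ} (𝓒 : Set (Finset (EE n))) : Prop :=
  ∀ C₁ ∈ 𝓒, ∀ C₂ ∈ 𝓒, C₁ ⊆ C₂ → C₁ = C₂

/-- Axiom (SC3): circuit elimination when the union is admissible. -/
def SC3 {n : ℕ} (𝓒 : Set (Finset (EE n))) : Prop :=
  ∀ C₁ ∈ 𝓒, ∀ C₂ ∈ 𝓒, C₁ ≠ C₂ → Admissible (C₁ ∪ C₂) →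
    ∀ x ∈ C₁ ∩ C₂, ∃ C ∈ 𝓒, C ⊆ (C₁ ∪ C₂) \ {x}

/-- Axiom (SC4): no small admissible set spans all of `E_{±n} − (P ∪ P*)`. -/
def SC4 {n : ℕ} (𝓒 : Set (Finset (EE n))) : Prop :=
  ∀ P : Finset (EE n), Admissible P → ∀ B ∈ BasesOf 𝓒, P.card < B.card →
    ∃ x, x ∉ P ∪ starSet P ∧ ¬ Spans 𝓒 P x

/-!
Since `#(B ∪ {x}) > #B`, the admissible set `B ∪ {x}` contains a circuit. Any circuit
`C ⊆ B ∪ {x}` contains `x` (as `C ⊄ B`) and every `b` with `B ∪ {x} − {b}` a basis, so it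
contains `C₀ = {x} ∪ {b ∈ B : B ∪ {x} − {b} ∈ 𝓑}`; by minimality `C = C₀` once `C₀` is known to
lie in no basis. For that, take an admissible ordering in which `C₀` comes first and the rest of
`B ∪ {x}` next. Its maximal basis `M` dominates every basis, and counting the elements above
each threshold gives `C₀ ⊆ M ⊆ B ∪ {x}` if `C₀` lay in a basis. Then `M = B ∪ {x} − {b}` for
some `b ∉ M`, so `b ∈ C₀ ⊆ M`, a contradiction.
-/

namespace List.Forall₂

variable {α β : Type*} {R : α → β → Prop} {l₁ : List α} {l₂ : List β}

theorem countP_le_countP {p : α → Bool} {q : β → Bool} (h : Forall₂ R l₁ l₂)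
    (hpq : ∀ a b, R a b → p a → q b) : l₁.countP p ≤ l₂.countP q := by
  induction h with
  | nil => simp
  | @cons a b _ _ hab _ ih =>
    simp only [countP_cons]
    by_cases ha : p a
    · simp [ha, hpq a b hab ha, ih]
    · simp only [ha, Bool.false_eq_true, if_false, add_zero]
      exact ih.trans (Nat.le_add_right _ _)

theorem trans {γ : Type*} {S : β → γ → Prop} {T : α → γ → Prop} {l₃ : List γ}
    (hRS : ∀ a b c, R a b → S b c → T a c) (h₁₂ : Forall₂ R l₁ l₂) (h₂₃ : Forall₂ S l₂ l₃) :
    Forall₂ T l₁ l₃ := by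
  induction h₁₂ generalizing l₃ with
  | nil => cases h₂₃; exact .nil
  | cons hab _ ih =>
    cases h₂₃ with
    | cons hbc h₂₃ => exact .cons (hRS _ _ _ hab hbc) (ih h₂₃)

theorem eq_of_sum_eq {M : Type*} [AddCommMonoid M] [PartialOrder M] [IsOrderedCancelAddMonoid M]
    {l₁ l₂ : List M} (h : Forall₂ (· ≤ ·) l₁ l₂) (hsum : l₁.sum = l₂.sum) : l₁ = l₂ := by
  induction h with
  | nil => rfl
  | cons hab h ih =>
    simp only [sum_cons] at hsum
    obtain ⟨rfl, hs⟩ := (add_eq_add_iff_eq_and_eq hab h.sum_le_sum).1 hsum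
    rw [ih hs]

end List.Forall₂

section

variable {n : ℕ}

theorem Admissible.mono {S T : Finset (EE n)} (hT : Admissible T) (hST : S ⊆ T) :
    Admissible S :=
  Disjoint.mono hST (image_subset_image hST) hT

theorem Admissible.snd_eq_of_mem {A : Finset (EE n)} (hA : Admissible A) {i : Fin n} {a : Bool}
    (h : (i, a) ∈ A) : a = decide ((i, true) ∈ A) := by
  cases a
  · have hstar : (i, true) ∉ A := fun ht => disjoint_left.1 hA h (mem_image_of_mem estar ht)
    simp [hstar]
  · simp [h]

-- Heights are mirrored about `K - 1/2`, so that `*` reverses the order.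
def mirroredHeight (s : Fin n → Bool) (p : Fin n → ℕ) (K : ℕ) (e : EE n) : ℕ :=
  if e.2 = s e.1 then K + p e.1 else K - 1 - p e.1

section mirroredHeight

variable {s : Fin n → Bool} {p : Fin n → ℕ} {K : ℕ}

theorem mirroredHeight_estar_add (hK : ∀ i, p i < K) (e : EE n) :
    mirroredHeight s p K (estar e) + mirroredHeight s p K e = 2 * K - 1 := by
  obtain ⟨i, a⟩ := e
  have := hK i
  dsimp only [mirroredHeight, estar]
  by_cases ha : a = s i
  · have hna : (!a) ≠ s i := ha ▸ Bool.not_ne_self _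
    rw [if_neg hna, if_pos ha]
    omega
  · have hna : (!a) = s i := by rw [Bool.eq_not_iff.2 ha, Bool.not_not]
    rw [if_pos hna, if_neg ha]
    omega

theorem mirroredHeight_injective (hp : Function.Injective p) (hK : ∀ i, p i < K) :
    Function.Injective (mirroredHeight s p K) := by
  rintro ⟨i, a⟩ ⟨j, b⟩ hij
  have := hK i
  have := hK j
  dsimp only [mirroredHeight] at hij
  split_ifs at hij with ha hb hb
  · obtain rfl : i = j := hp (by omega)
    rw [ha, hb]
  · omega
  · omega
  · obtain rfl : i = j := hp (by omega)
    rw [(Bool.eq_not_iff.2 ha).trans (Bool.eq_not_iff.2 hb).symm]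

end mirroredHeight

def AdmOrdering.ofHeights (s : Fin n → Bool) (p : Fin n → ℕ) (K : ℕ)
    (hp : Function.Injective p) (hK : ∀ i, p i < K) : AdmOrdering n where
  w := mirroredHeight s p K
  inj := mirroredHeight_injective hp hK
  rev e f hef := by
    have := mirroredHeight_estar_add (s := s) hK e
    have := mirroredHeight_estar_add (s := s) hK f
    omega

theorem exists_admOrdering_upperSets {A C : Finset (EE n)} (hA : Admissible A) (hCA : C ⊆ A) :
    ∃ (o : AdmOrdering n) (t₁ t₂ : ℕ),
      (∀ e, e ∈ C ↔ t₁ ≤ o.w e) ∧ (∀ e, e ∈ A ↔ t₂ ≤ o.w e) := by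
  classical
  let s : Fin n → Bool := fun i => decide ((i, true) ∈ A)
  let p : Fin n → ℕ := fun i =>
    if (i, s i) ∈ C then 2 * n + i else if (i, s i) ∈ A then n + i else i
  have hp : Function.Injective p := by
    intro i j hij
    have := i.isLt
    have := j.isLt
    ext
    simp only [p] at hij
    split_ifs at hij <;> omega
  have hK : ∀ i, p i < 3 * n := by
    intro i
    have := i.isLt
    simp only [p]
    split_ifs <;> omega
  refine ⟨.ofHeights s p (3 * n) hp hK, 5 * n, 4 * n, ?_, ?_⟩ <;>
  · rintro ⟨i, a⟩
    have := i.isLt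
    by_cases ha : a = s i
    · subst ha
      have := @hCA (i, s i)
      simp only [AdmOrdering.ofHeights, mirroredHeight, if_true, p]
      split_ifs <;> simp_all <;> omega
    · have hiA : (i, a) ∉ A := fun h => ha (hA.snd_eq_of_mem h)
      have hiC : (i, a) ∉ C := fun h => hiA (hCA h)
      simp only [AdmOrdering.ofHeights, mirroredHeight, ha, if_false, hiA, hiC, false_iff]
      omega

namespace setLE

variable {o : AdmOrdering n} {S T U : Finset (EE n)}

theorem refl (o : AdmOrdering n) (S : Finset (EE n)) : setLE o S S :=
  List.forall₂_same.2 fun _ _ => le_rfl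

theorem trans (hST : setLE o S T) (hTU : setLE o T U) : setLE o S U :=
  List.Forall₂.trans (S := (· ≤ ·)) (fun _ _ _ => le_trans) hST hTU

theorem eq_of_sum_eq (h : setLE o S T)
    (hsum : (sort (S.image o.w) (· ≤ ·)).sum = (sort (T.image o.w) (· ≤ ·)).sum) : S = T := by
  have hsort := List.Forall₂.eq_of_sum_eq h hsum
  have himage : S.image o.w = T.image o.w := by
    rw [← sort_toFinset (S.image o.w) (· ≤ ·), hsort, sort_toFinset]
  exact image_injective o.inj himage

theorem card_inter_le (h : setLE o S T) {t : ℕ} (hU : ∀ e, e ∈ U ↔ t ≤ o.w e) :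
    #(S ∩ U) ≤ #(T ∩ U) := by
  have hcount : ∀ V : Finset (EE n),
      #(V ∩ U) = (sort (V.image o.w) (· ≤ ·)).countP (fun v => t ≤ v) := by
    intro V
    rw [← Multiset.coe_countP, sort_eq, Multiset.countP_eq_card_filter, ← filter_val,
      ← card_def, filter_image, card_image_of_injective _ o.inj, ← filter_mem_eq_inter]
    exact congrArg card (filter_congr fun e _ => by simp [hU])
  rw [hcount, hcount]
  exact List.Forall₂.countP_le_countP h fun _ _ hab hta =>
    decide_eq_true ((of_decide_eq_true hta).trans hab)

end setLE

theorem HasUniqueMaximal.exists_greatest {𝓑 : Set (Finset (EE n))} (h : HasUniqueMaximal 𝓑)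
    (o : AdmOrdering n) : ∃ M ∈ 𝓑, ∀ S ∈ 𝓑, setLE o S M := by
  obtain ⟨M, ⟨hM, -⟩, huniq⟩ := h o
  refine ⟨M, hM, fun S hS => ?_⟩
  -- A basis above `S` with the largest rank sum is maximal, hence is `M`.
  obtain ⟨M₀, ⟨hM₀, hSM₀⟩, hM₀max⟩ :=
    Set.Finite.exists_maximalFor (fun U => (sort (U.image o.w) (· ≤ ·)).sum)
      {U | U ∈ 𝓑 ∧ setLE o S U} (Set.toFinite _) ⟨S, hS, setLE.refl o S⟩
  have hM₀maximal : ∀ Y ∈ 𝓑, setLE o M₀ Y → M₀ = Y := fun Y hY hM₀Y =>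
    hM₀Y.eq_of_sum_eq (le_antisymm (List.Forall₂.sum_le_sum hM₀Y)
      (hM₀max ⟨hY, hSM₀.trans hM₀Y⟩ (List.Forall₂.sum_le_sum hM₀Y)))
  exact huniq M₀ ⟨hM₀, hM₀maximal⟩ ▸ hSM₀

theorem exists_circuit_subset {𝓑 : Set (Finset (EE n))} {S : Finset (EE n)} (hS : Admissible S)
    (hdep : ∀ T ∈ 𝓑, ¬ S ⊆ T) : ∃ C ∈ Circuits 𝓑, C ⊆ S := by
  obtain ⟨C, hCS, ⟨hCadm, hCdep⟩, hCmin⟩ := exists_minimal_le_of_wellFoundedLT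
    (fun D => Admissible D ∧ ∀ T ∈ 𝓑, ¬ D ⊆ T) S ⟨hS, hdep⟩
  refine ⟨C, ⟨hCadm, hCdep, fun D hDC hD => ?_⟩, hCS⟩
  by_contra! hDdep
  exact hDC.2 (hCmin ⟨hD, hDdep⟩ hDC.1)

theorem insert_not_subset_of_card_eq {𝓑 : Set (Finset (EE n))}
    (hcard : ∀ S ∈ 𝓑, ∀ T ∈ 𝓑, #S = #T) {B : Finset (EE n)} (hB : B ∈ 𝓑) {x : EE n}
    (hx : x ∉ B) : ∀ T ∈ 𝓑, ¬ insert x B ⊆ T := by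
  intro T hT hBT
  have := card_le_card hBT
  rw [card_insert_of_notMem hx, hcard T hT B hB] at this
  omega

open scoped Classical in
noncomputable def fundamentalCircuit (𝓑 : Set (Finset (EE n))) (B : Finset (EE n)) (x : EE n) :
    Finset (EE n) :=
  insert x (B.filter fun b => insert x B \ {b} ∈ 𝓑)

section fundamentalCircuit

open scoped Classical

variable {𝓑 : Set (Finset (EE n))} {B : Finset (EE n)} {x : EE n}

theorem fundamentalCircuit_subset : fundamentalCircuit 𝓑 B x ⊆ insert x B :=
  insert_subset_insert x (filter_subset _ B)

theorem fundamentalCircuit_subset_of_circuit (hB : B ∈ 𝓑) {C : Finset (EE n)}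
    (hC : C ∈ Circuits 𝓑) (hCB : C ⊆ insert x B) : fundamentalCircuit 𝓑 B x ⊆ C := by
  obtain ⟨-, hCdep, -⟩ := hC
  have hxC : x ∈ C := by
    by_contra hxC
    exact hCdep B hB fun c hc =>
      (mem_insert.1 (hCB hc)).resolve_left (ne_of_mem_of_not_mem hc hxC)
  refine insert_subset hxC fun b hb => ?_
  obtain ⟨-, hbasis⟩ := mem_filter.1 hb
  by_contra hbC
  exact hCdep _ hbasis fun c hc =>
    mem_sdiff.2 ⟨hCB hc, notMem_singleton.2 (ne_of_mem_of_not_mem hc hbC)⟩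

theorem fundamentalCircuit_not_subset (hmax : HasUniqueMaximal 𝓑)
    (hcard : ∀ S ∈ 𝓑, ∀ T ∈ 𝓑, #S = #T) (hB : B ∈ 𝓑) (hx : x ∉ B)
    (hadm : Admissible (insert x B)) : ∀ T ∈ 𝓑, ¬ fundamentalCircuit 𝓑 B x ⊆ T := by
  intro T hT hCT
  obtain ⟨o, t₁, t₂, hC, hA⟩ := exists_admOrdering_upperSets hadm fundamentalCircuit_subset
  obtain ⟨M, hM, hMgreatest⟩ := hmax.exists_greatest o
  have hCM : fundamentalCircuit 𝓑 B x ⊆ M := by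
    have := (hMgreatest T hT).card_inter_le hC
    rw [inter_eq_right.2 hCT] at this
    exact inter_eq_right.1 (eq_of_subset_of_card_le inter_subset_right this)
  have hMA : M ⊆ insert x B := by
    have := (hMgreatest B hB).card_inter_le hA
    rw [inter_eq_left.2 (subset_insert x B), hcard B hB M hM] at this
    exact inter_eq_left.1 (eq_of_subset_of_card_le inter_subset_left this)
  obtain ⟨b, hb⟩ : ∃ b, insert x B \ M = {b} := by
    apply card_eq_one.1
    rw [card_sdiff_of_subset hMA, card_insert_of_notMem hx, hcard M hM B hB]
    omega
  have hbM : b ∉ M := (mem_sdiff.1 (hb ▸ mem_singleton_self b)).2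
  have hbB : b ∈ B := by
    refine (mem_insert.1 (mem_sdiff.1 (hb ▸ mem_singleton_self b)).1).resolve_left ?_
    rintro rfl
    exact hbM (hCM (mem_insert_self b _))
  have hbasis : insert x B \ {b} ∈ 𝓑 := by rwa [← hb, Finset.sdiff_sdiff_eq_self hMA]
  exact hbM (hCM (mem_insert_of_mem (mem_filter.2 ⟨hbB, hbasis⟩)))

theorem eq_fundamentalCircuit_of_circuit (hmax : HasUniqueMaximal 𝓑)
    (hcard : ∀ S ∈ 𝓑, ∀ T ∈ 𝓑, #S = #T) (hB : B ∈ 𝓑) (hx : x ∉ B)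
    (hadm : Admissible (insert x B)) {C : Finset (EE n)} (hC : C ∈ Circuits 𝓑)
    (hCB : C ⊆ insert x B) : C = fundamentalCircuit 𝓑 B x := by
  by_contra hne
  have hsub := fundamentalCircuit_subset_of_circuit hB hC hCB
  obtain ⟨T, hT, hsubT⟩ := hC.2.2 _ (ssubset_of_subset_of_ne hsub (Ne.symm hne))
    (hadm.mono fundamentalCircuit_subset)
  exact fundamentalCircuit_not_subset hmax hcard hB hx hadm T hT hsubT

end fundamentalCircuit

end

open scoped Classical in
/-- if `B` is a basis, `x ∉ B` and `B ∪ {x}` is admissible, then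
`B ∪ {x}` contains a unique circuit, namely
`{x} ∪ {b ∈ B : B ∪ {x} − {b} ∈ 𝓑}`. -/
theorem unique_circuit_in_basis_extension {n : ℕ} (𝓑 : Set (Finset (EE n)))
    (h : IsSymplecticMatroid 𝓑) (B : Finset (EE n)) (hB : B ∈ 𝓑)
    (x : EE n) (hx : x ∉ B) (hadm : Admissible (insert x B)) :
    insert x (B.filter (fun b => insert x B \ {b} ∈ 𝓑)) ∈ Circuits 𝓑 ∧
    insert x (B.filter (fun b => insert x B \ {b} ∈ 𝓑)) ⊆ insert x B ∧
    ∀ C ∈ Circuits 𝓑, C ⊆ insert x B →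
      C = insert x (B.filter (fun b => insert x B \ {b} ∈ 𝓑)) := by
  obtain ⟨-, -, hcard, hmax⟩ := h
  have hunique : ∀ C ∈ Circuits 𝓑, C ⊆ insert x B → C = fundamentalCircuit 𝓑 B x :=
    fun C hC hCB => eq_fundamentalCircuit_of_circuit hmax hcard hB hx hadm hC hCB
  obtain ⟨C, hC, hCB⟩ := exists_circuit_subset hadm (insert_not_subset_of_card_eq hcard hB hx)
  have hcircuit : fundamentalCircuit 𝓑 B x ∈ Circuits 𝓑 := hunique C hC hCB ▸ hC
  exact ⟨hcircuit, fundamentalCircuit_subset, hunique⟩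
end

section
/- Let B be a collection of admissible subsets of E_{±n}, all of cardinality k ≤ n. If B satisfies the Symmetric Exchange Axiom (for every X, Y ∈ B and i ∈ Y − X, there exists j ∈ X − Y with (X ∪ {i}) − {j} ∈ B), then B satisfies the Maximality Property: for every admissible ordering of E_{±n}, B contains a unique maximal element under the induced partial order. -/
open Finset

/-!
Under an admissible ordering with rank function `w`, if the sorted ranks of `A` are
componentwise at most those of `B`, then `∑ A w ≤ ∑ B w`, with equality only for `A = B`. Hence
a member of `𝓑` of largest rank sum is maximal. If `M ≠ N` were both maximal, let `i` be the
element of `M ∆ N` of highest rank, say `i ∈ N \ M`. Symmetric exchange yields `j ∈ M \ N` with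
`(M ∪ {i}) \ {j} ∈ 𝓑`; as `w j < w i`, this set lies strictly above `M`, a contradiction.
Comparing sorted lists reduces to counting: one sorted list dominates another of the same
length iff above every threshold it has at least as many entries.
-/

namespace List

theorem Forall₂.eq_of_sum_le {M : Type*} [AddCommMonoid M] [PartialOrder M]
    [IsOrderedCancelAddMonoid M] {l₁ l₂ : List M} (h : Forall₂ (· ≤ ·) l₁ l₂)
    (hsum : l₂.sum ≤ l₁.sum) : l₁ = l₂ := by
  induction h with
  | nil => rfl
  | @cons a b t₁ t₂ hab htail ih =>
    rw [sum_cons, sum_cons] at hsum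
    have hts := htail.sum_le_sum
    have hba : b ≤ a := le_of_add_le_add_right (hsum.trans (add_le_add le_rfl hts))
    have hts' : t₂.sum ≤ t₁.sum := le_of_add_le_add_left (hsum.trans (add_le_add hab le_rfl))
    rw [le_antisymm hab hba, ih hts']

theorem forall₂_le_of_countP_lt_le {α : Type*} [LinearOrder α] :
    ∀ {l₁ l₂ : List α}, l₁.Pairwise (· ≤ ·) → l₂.Pairwise (· ≤ ·) → l₁.length = l₂.length →
      (∀ m, l₁.countP (m < ·) ≤ l₂.countP (m < ·)) → Forall₂ (· ≤ ·) l₁ l₂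
  | [], [], _, _, _, _ => .nil
  | a :: t₁, b :: t₂, h₁, h₂, hlen, hc => by
    rw [pairwise_cons] at h₁ h₂
    have hlen' : t₁.length = t₂.length := by simpa using hlen
    have hab : a ≤ b := by
      by_contra! hba
      have hall : (a :: t₁).countP (b < ·) = t₁.length + 1 := by
        refine (countP_eq_length.2 fun x hx => ?_).trans (length_cons ..)
        rcases mem_cons.1 hx with rfl | hx
        · simpa using hba
        · simpa using hba.trans_le (h₁.1 x hx)
      have hb := hc b
      rw [hall, countP_cons, if_neg (by simp)] at hb
      have := countP_le_length (p := fun x => decide (b < x)) (l := t₂)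
      omega
    refine .cons hab (forall₂_le_of_countP_lt_le h₁.2 h₂.2 hlen' fun m => ?_)
    rcases le_or_gt b m with hbm | hmb
    · simpa [countP_cons, not_lt.2 hbm, not_lt.2 (hab.trans hbm)] using hc m
    · have hall : t₂.countP (m < ·) = t₂.length :=
        countP_eq_length.2 fun x hx => by simpa using hmb.trans_le (h₂.1 x hx)
      rw [hall, ← hlen']
      exact countP_le_length

end List

namespace Finset

variable {α : Type*} [LinearOrder α]

theorem forall₂_sort_le_of_card_filter_lt_le {s t : Finset α} (hcard : #s = #t)
    (h : ∀ m, #{x ∈ s | m < x} ≤ #{x ∈ t | m < x}) :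
    List.Forall₂ (· ≤ ·) (sort s (· ≤ ·)) (sort t (· ≤ ·)) := by
  have hcount (u : Finset α) (m : α) : (sort u (· ≤ ·)).countP (m < ·) = #{x ∈ u | m < x} := by
    rw [← Multiset.coe_countP, sort_eq, Multiset.countP_eq_card_filter]
    rfl
  refine List.forall₂_le_of_countP_lt_le (pairwise_sort _ _) (pairwise_sort _ _)
    (by rw [length_sort, length_sort, hcard]) fun m => ?_
  rw [hcount, hcount]
  exact h m

theorem forall₂_sort_le_insert_erase {s : Finset α} {a b : α} (hb : b ∈ s) (ha : a ∉ s)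
    (hba : b ≤ a) :
    List.Forall₂ (· ≤ ·) (sort s (· ≤ ·)) (sort (insert a (s.erase b)) (· ≤ ·)) := by
  have ha' : a ∉ s.erase b := fun h => ha (mem_of_mem_erase h)
  refine forall₂_sort_le_of_card_filter_lt_le
    (by rw [card_insert_of_notMem ha', card_erase_add_one hb]) fun m => ?_
  by_cases hmb : m < b
  · have hsub : insert a ({x ∈ s | m < x}.erase b) ⊆ {x ∈ insert a (s.erase b) | m < x} := by
      intro x
      simp only [mem_insert, mem_erase, mem_filter]
      rintro (rfl | ⟨hxb, hxs, hmx⟩)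
      · exact ⟨.inl rfl, hmb.trans_le hba⟩
      · exact ⟨.inr ⟨hxb, hxs⟩, hmx⟩
    calc #{x ∈ s | m < x} = #(insert a ({x ∈ s | m < x}.erase b)) := by
          rw [card_insert_of_notMem (fun h => ha (mem_filter.1 (mem_of_mem_erase h)).1),
            card_erase_add_one (mem_filter.2 ⟨hb, hmb⟩)]
      _ ≤ _ := card_le_card hsub
  · refine card_le_card fun x hx => ?_
    obtain ⟨hxs, hmx⟩ := mem_filter.1 hx
    exact mem_filter.2 ⟨mem_insert_of_mem (mem_erase.2 ⟨fun h => hmb (h ▸ hmx), hxs⟩), hmx⟩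

end Finset

section AdmOrdering

variable {n : ℕ} {o : AdmOrdering n}

theorem AdmOrdering.sum_sort_image (o : AdmOrdering n) (S : Finset (EE n)) :
    (sort (S.image o.w) (· ≤ ·)).sum = ∑ x ∈ S, o.w x := by
  rw [← Multiset.sum_coe, sort_eq, sum_val, sum_image fun x _ y _ h => o.inj h]
  rfl

theorem setLE.eq_of_sum_le {A B : Finset (EE n)} (h : setLE o A B)
    (hsum : ∑ x ∈ B, o.w x ≤ ∑ x ∈ A, o.w x) : A = B := by
  have hsort := List.Forall₂.eq_of_sum_le h (by simpa only [o.sum_sort_image] using hsum)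
  apply image_injective o.inj
  rw [← sort_toFinset (A.image o.w) (· ≤ ·), hsort, sort_toFinset]

theorem setLE_insert_erase {X : Finset (EE n)} {i j : EE n} (hj : j ∈ X) (hi : i ∉ X)
    (hw : o.w j ≤ o.w i) : setLE o X (insert i (X.erase j)) := by
  rw [setLE, image_insert, image_erase o.inj]
  exact forall₂_sort_le_insert_erase (mem_image_of_mem _ hj)
    (fun h => hi (o.inj.mem_finset_image.1 h)) hw

def SymmetricExchange (𝓑 : Set (Finset (EE n))) : Prop :=
  ∀ X ∈ 𝓑, ∀ Y ∈ 𝓑, ∀ i ∈ Y \ X, ∃ j ∈ X \ Y, insert i X \ {j} ∈ 𝓑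

def IsSetLEMaximal (o : AdmOrdering n) (𝓑 : Set (Finset (EE n))) (M : Finset (EE n)) : Prop :=
  M ∈ 𝓑 ∧ ∀ S ∈ 𝓑, setLE o M S → M = S

variable {𝓑 : Set (Finset (EE n))}

theorem exists_isSetLEMaximal (o : AdmOrdering n) (hne : 𝓑.Nonempty) :
    ∃ M, IsSetLEMaximal o 𝓑 M := by
  obtain ⟨M, hM, hmax⟩ := Set.exists_max_image 𝓑 (fun S => ∑ x ∈ S, o.w x) (Set.toFinite 𝓑) hne
  exact ⟨M, hM, fun S hS hle => hle.eq_of_sum_le (hmax S hS)⟩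

/-- Otherwise the exchanged set `insert i X \ {j}` would lie above `X`. -/
theorem SymmetricExchange.exists_rank_lt (hex : SymmetricExchange 𝓑) {X Y : Finset (EE n)}
    (hX : IsSetLEMaximal o 𝓑 X) (hY : Y ∈ 𝓑) {i : EE n} (hi : i ∈ Y \ X) :
    ∃ j ∈ X \ Y, o.w i < o.w j := by
  obtain ⟨j, hj, hexch⟩ := hex X hX.1 Y hY i hi
  refine ⟨j, hj, lt_of_not_ge fun hji => (mem_sdiff.1 hi).2 ?_⟩
  have hij : i ≠ j := by rintro rfl; exact (mem_sdiff.1 hi).2 (mem_sdiff.1 hj).1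
  rw [sdiff_singleton_eq_erase, erase_insert_of_ne hij] at hexch
  rw [hX.2 _ hexch (setLE_insert_erase (mem_sdiff.1 hj).1 (mem_sdiff.1 hi).2 hji)]
  exact mem_insert_self i _

open scoped symmDiff in
/-- The element of highest rank in `M ∆ N` would be outranked by another one. -/
theorem SymmetricExchange.isSetLEMaximal_unique (hex : SymmetricExchange 𝓑)
    {M N : Finset (EE n)} (hM : IsSetLEMaximal o 𝓑 M) (hN : IsSetLEMaximal o 𝓑 N) : M = N := by
  by_contra hMN
  obtain ⟨i, hi, himax⟩ := exists_max_image (M ∆ N) o.w (symmDiff_nonempty.2 hMN)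
  obtain ⟨j, hj, hij⟩ : ∃ j ∈ M ∆ N, o.w i < o.w j := by
    rcases mem_symmDiff.1 hi with hi | hi
    · obtain ⟨j, hj, hij⟩ := hex.exists_rank_lt hN hM.1 (mem_sdiff.2 hi)
      exact ⟨j, mem_symmDiff.2 (.inr (mem_sdiff.1 hj)), hij⟩
    · obtain ⟨j, hj, hij⟩ := hex.exists_rank_lt hM hN.1 (mem_sdiff.2 hi)
      exact ⟨j, mem_symmDiff.2 (.inl (mem_sdiff.1 hj)), hij⟩
  exact (himax j hj).not_gt hij

end AdmOrdering

theorem symmetric_exchange_implies_maximality_general {n : ℕ}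
    (𝓑 : Set (Finset (EE n))) (hne : 𝓑.Nonempty)
    (hex : ∀ X ∈ 𝓑, ∀ Y ∈ 𝓑, ∀ i ∈ Y \ X, ∃ j ∈ X \ Y, insert i X \ {j} ∈ 𝓑) :
    HasUniqueMaximal 𝓑 := by
  intro o
  obtain ⟨M, hM⟩ := exists_isSetLEMaximal o hne
  exact ⟨M, hM, fun N hN => SymmetricExchange.isSetLEMaximal_unique hex hN hM⟩

/-- the Symmetric Exchange Axiom implies the Maximality Property
for a collection of admissible `k`-subsets of `E_{±n}`, `k ≤ n`. -/
theorem symmetric_exchange_implies_maximality {n k : ℕ} (hk : k ≤ n)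
    (𝓑 : Set (Finset (EE n))) (hne : 𝓑.Nonempty)
    (hadm : ∀ B ∈ 𝓑, Admissible B) (hcard : ∀ B ∈ 𝓑, B.card = k)
    (hex : ∀ X ∈ 𝓑, ∀ Y ∈ 𝓑, ∀ i ∈ Y \ X, ∃ j ∈ X \ Y, insert i X \ {j} ∈ 𝓑) :
    HasUniqueMaximal 𝓑 :=
  symmetric_exchange_implies_maximality_general 𝓑 hne hex
end

section
/- Let C be a collection of admissible subsets of E_{±n} satisfying: (SC1) ∅ ∉ C; (SC2) no member of C properly contains another; (SC3) circuit elimination for pairs with admissible union; (SC4) no admissible set P with |P| less than the size of a maximal C-free admissible set spans all of E_{±n} − (P ∪ P*). Let B be the collection of maximal admissible subsets of E_{±n} containing no member of C. Then all members of B have the same cardinality. -/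
open Finset

/-
A base `B` spans every element `x` outside `B ∪ B*`: the set `B ∪ {x}` is admissible and strictly
larger than `B`, so it contains a circuit `C`; since `B` contains no circuit, `x ∈ C` and hence
`C − B = {x}`. If some base `B₁` were smaller than another base `B₂`, (SC4) applied to `P = B₁`
would produce an `x` outside `B₁ ∪ B₁*` not spanned by `B₁`, a contradiction.
-/

@[simp]
theorem estar_estar {n : ℕ} (x : EE n) : estar (estar x) = x := by
  simp [estar]

theorem estar_ne_self {n : ℕ} (x : EE n) : estar x ≠ x := by
  simp [estar, Prod.ext_iff]

theorem mem_starSet {n : ℕ} {S : Finset (EE n)} {x : EE n} : x ∈ starSet S ↔ estar x ∈ S := by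
  constructor
  · rintro h
    obtain ⟨y, hy, rfl⟩ := mem_image.mp h
    simpa using hy
  · exact fun h => mem_image.mpr ⟨estar x, h, estar_estar x⟩

theorem Admissible.insert {n : ℕ} {S : Finset (EE n)} {x : EE n} (hS : Admissible S)
    (hx : x ∉ starSet S) : Admissible (insert x S) := by
  rw [Admissible, disjoint_left] at hS ⊢
  intro y hy hy'
  rw [mem_starSet, mem_insert] at hy'
  rw [mem_starSet] at hx
  rcases mem_insert.mp hy with rfl | hyS
  · rcases hy' with h | h
    · exact estar_ne_self y h
    · exact hx h
  · rcases hy' with h | h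
    · rw [← h, estar_estar] at hx
      exact hx hyS
    · exact hS hyS (mem_starSet.mpr h)

theorem spans_of_mem_basesOf {n : ℕ} {𝓒 : Set (Finset (EE n))} {B : Finset (EE n)}
    (hB : B ∈ BasesOf 𝓒) {x : EE n} (hx : x ∉ B ∪ starSet B) : Spans 𝓒 B x := by
  obtain ⟨hBadm, hBfree, hBmax⟩ := hB
  rw [mem_union, not_or] at hx
  obtain ⟨C, hC, hCsub⟩ := hBmax _ (ssubset_insert hx.1) (hBadm.insert hx.2)
  have hxC : x ∈ C := by
    by_contra hxC
    exact hBfree C hC fun y hy =>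
      (mem_insert.mp (hCsub hy)).resolve_left (ne_of_mem_of_not_mem hy hxC)
  refine ⟨C, hC, eq_singleton_iff_unique_mem.mpr ⟨mem_sdiff.mpr ⟨hxC, hx.1⟩, ?_⟩⟩
  intro y hy
  rw [mem_sdiff] at hy
  exact (mem_insert.mp (hCsub hy.1)).resolve_right hy.2

theorem card_le_card_of_mem_basesOf {n : ℕ} {𝓒 : Set (Finset (EE n))} (h4 : SC4 𝓒)
    {B₁ B₂ : Finset (EE n)} (hB₁ : B₁ ∈ BasesOf 𝓒) (hB₂ : B₂ ∈ BasesOf 𝓒) :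
    B₂.card ≤ B₁.card := by
  by_contra! hlt
  obtain ⟨x, hx, hnotSpans⟩ := h4 B₁ hB₁.1 B₂ hB₂ hlt
  exact hnotSpans (spans_of_mem_basesOf hB₁ hx)

theorem bases_equicardinal_general {n : ℕ} (𝓒 : Set (Finset (EE n)))
    (h4 : SC4 𝓒) :
    ∀ B₁ ∈ BasesOf 𝓒, ∀ B₂ ∈ BasesOf 𝓒, B₁.card = B₂.card :=
  fun _ hB₁ _ hB₂ =>
    le_antisymm (card_le_card_of_mem_basesOf h4 hB₂ hB₁) (card_le_card_of_mem_basesOf h4 hB₁ hB₂)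

/-- Claim 1: under (SC1)–(SC4), the maximal admissible subsets
containing no member of `𝓒` are equicardinal. -/
theorem bases_equicardinal {n : ℕ} (𝓒 : Set (Finset (EE n)))
    (hadm : ∀ C ∈ 𝓒, Admissible C)
    (h1 : SC1 𝓒) (h2 : SC2 𝓒) (h3 : SC3 𝓒) (h4 : SC4 𝓒) :
    ∀ B₁ ∈ BasesOf 𝓒, ∀ B₂ ∈ BasesOf 𝓒, B₁.card = B₂.card :=
  bases_equicardinal_general 𝓒 h4
end

section
/- In a signed graph Γ, the edge sets all of whose connected components are trees or unicyclic graphs whose unique cycle is unbalanced form the independent sets of a matroid M(Γ) on the edge set of Γ. Moreover, every basis of M(Γ) has at most |V(Γ)| elements. -/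
open Finset

/-- A finite undirected multigraph: each edge has a pair (possibly equal) of endpoints. -/
structure Multigraph (V : Type) (Edge : Type) where
  ends : Edge → Sym2 V

/-- `F` is the edge set of a (single) cycle in `G`: there are distinct edges
`e 0, …, e (m-1)` and distinct vertices `v 0, …, v (m-1)` with `e i` joining
`v i` to `v (i+1)`. -/
def IsCycleSet {V Edge : Type} [DecidableEq Edge] (G : Multigraph V Edge)
    (F : Finset Edge) : Prop :=
  ∃ (m : ℕ) (hm : 0 < m) (e : Fin m → Edge) (v : Fin m → V),
    Function.Injective e ∧ Function.Injective v ∧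
    Finset.univ.image e = F ∧
    ∀ i : Fin m, G.ends (e i) = s(v i, v ⟨(i.val + 1) % m, Nat.mod_lt _ hm⟩)

/-- A cycle is balanced if it has an even number of negative edges
(`sgn e = true` meaning `e` is negative). -/
def BalancedCycle {Edge : Type} [DecidableEq Edge] (sgn : Edge → Bool)
    (F : Finset Edge) : Prop :=
  Even (F.filter (fun e => sgn e)).card

/-- Two edges are linked in `F` if they are joined by a chain of edges of `F`
consecutively sharing a vertex. -/
def Linked {V Edge : Type} (G : Multigraph V Edge) (F : Finset Edge) (e f : Edge) : Prop :=
  Relation.ReflTransGen (fun a b => a ∈ F ∧ b ∈ F ∧ ∃ x, x ∈ G.ends a ∧ x ∈ G.ends b) e f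

open scoped Classical in
/-- The connected component (as an edge set) of `e` in the edge set `F`. -/
noncomputable def Component {V Edge : Type} [DecidableEq Edge] (G : Multigraph V Edge)
    (F : Finset Edge) (e : Edge) : Finset Edge :=
  F.filter (fun f => Linked G F e f)

/-- `F` is independent in the signed graph `(G, sgn)`: every connected component
is either a tree (contains no cycle) or a unicyclic graph whose unique cycle is
unbalanced. -/
def SgnIndep {V Edge : Type} [DecidableEq Edge] (G : Multigraph V Edge)
    (sgn : Edge → Bool) (F : Finset Edge) : Prop :=
  ∀ e ∈ F,
    (∀ C ⊆ Component G F e, ¬ IsCycleSet G C) ∨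
    ((∃! C, C ⊆ Component G F e ∧ IsCycleSet G C) ∧
      ∀ C ⊆ Component G F e, IsCycleSet G C → ¬ BalancedCycle sgn C)

/-!
The matroid is the linear matroid, over `ℚ`, of the signed incidence vectors: an edge from `a` to
`b` with sign `σ` gets the column `δ a - σ δ b`. Around a cycle these columns satisfy a linear
relation exactly when the product of the signs is `1`, i.e. when the cycle is balanced.

Conversely, the support of a linear relation among the columns has no leaf. A nonempty leafless
edge set contains a cycle, and if it contains only one cycle `C`, counting vertices and edges
shows that it is `C` itself. So a relation supported in a component with at most one cycle, and
that one unbalanced, is trivial. A connected edge set with two distinct cycles has more edges than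
vertices: in the all-positive signing every cycle carries a relation, while the columns of a
connected edge set span all differences `δ w - δ w₀`. Its signed columns, which lie in the span of
the `δ w` of its vertices, are then dependent. Finally, bases are independent in `ℚ^V`, so they
have at most `|V|` elements.
-/

section LinearAlgebra

variable {ι K M : Type*} [Field K] [AddCommGroup M] [Module K M]

theorem mem_span_image_of_sum_eq_zero [DecidableEq ι] {v : ι → M} {s : Finset ι} {c : ι → K}
    (hc : ∑ i ∈ s, c i • v i = 0) {j : ι} (hj : j ∈ s) (hcj : c j ≠ 0) :
    v j ∈ Submodule.span K (v '' ↑(s.erase j)) := by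
  rw [← Finset.add_sum_erase s _ hj, add_eq_zero_iff_eq_neg] at hc
  rw [← Submodule.smul_mem_iff _ hcj, hc]
  exact Submodule.neg_mem _ (Submodule.sum_mem _ fun i hi =>
    Submodule.smul_mem _ _ (Submodule.subset_span (Set.mem_image_of_mem v hi)))

theorem LinearIndepOn.card_le_card_of_subset_span {v : ι → M} {s : Finset ι} {t : Finset M}
    (hs : LinearIndepOn K v ↑s) (hst : ∀ i ∈ s, v i ∈ Submodule.span K ↑t) :
    s.card ≤ t.card := by
  simpa using linearIndependent_le_span_aux' (fun i : ↥s => v i) hs t (by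
    rintro _ ⟨i, rfl⟩; exact hst i i.2)

theorem LinearIndepOn.exists_insert_of_ncard_lt {v : ι → M} {I J : Set ι}
    (hI : LinearIndepOn K v I) (hIfin : I.Finite) (hJ : LinearIndepOn K v J) (hJfin : J.Finite)
    (hlt : I.ncard < J.ncard) : ∃ e ∈ J, e ∉ I ∧ LinearIndepOn K v (insert e I) := by
  classical
  by_contra! hno
  lift I to Finset ι using hIfin
  lift J to Finset ι using hJfin
  have hspan : ∀ e ∈ J, v e ∈ Submodule.span K ↑(I.image v) := by
    intro e he
    by_cases heI : e ∈ I
    · exact Submodule.subset_span (by simpa using ⟨e, heI, rfl⟩)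
    · simpa using (hI.mem_span_iff (a := e)).mpr fun h => absurd (hno e he heI) (not_not.mpr h)
  have := hJ.card_le_card_of_subset_span hspan
  rw [Set.ncard_coe_finset, Set.ncard_coe_finset] at hlt
  exact absurd (this.trans Finset.card_image_le) (not_le.mpr hlt)

variable (K) in
noncomputable def linearMatroid (v : ι → M) : Matroid ι :=
  (IndepMatroid.ofFinitaryCardAugment Set.univ (LinearIndepOn K v) (linearIndepOn_empty K v)
    (fun _ _ hJ hIJ => hJ.mono hIJ)
    (fun _ _ hI hIfin hJ hJfin hlt => hI.exists_insert_of_ncard_lt hIfin hJ hJfin hlt)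
    (fun I h => linearIndepOn_of_finite I h) (fun _ _ => Set.subset_univ _)).matroid

@[simp] theorem linearMatroid_E (v : ι → M) : (linearMatroid K v).E = Set.univ := rfl

@[simp] theorem linearMatroid_indep_iff {v : ι → M} {I : Set ι} :
    (linearMatroid K v).Indep I ↔ LinearIndepOn K v I := Iff.rfl

end LinearAlgebra

section CyclicRecurrence

open Fin.NatCast

variable {K : Type*} [Field K] {n : ℕ}

theorem eq_zero_of_cyclic_recurrence {h σ : Fin (n + 1) → K}
    (hrec : ∀ i, h (i + 1) = σ i * h i) (hσ : ∏ i, σ i ≠ 1) : h = 0 := by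
  have hpow : ∀ k : ℕ, h k = (∏ j ∈ Finset.range k, σ j) * h 0 := by
    intro k
    induction k with
    | zero => simp
    | succ k ih => rw [Nat.cast_succ, hrec, ih, Finset.prod_range_succ]; ring
  have h0 : h 0 = 0 := by
    have hper := hpow (n + 1)
    rw [Fin.natCast_self, ← Fin.prod_univ_eq_prod_range (fun j => σ j)] at hper
    simp only [Fin.cast_val_eq_self] at hper
    have : (1 - ∏ i, σ i) * h 0 = 0 := by linear_combination hper
    exact (mul_eq_zero.mp this).resolve_left (sub_ne_zero.mpr hσ.symm)
  funext i
  rw [← Fin.cast_val_eq_self i, hpow, h0, mul_zero, Pi.zero_apply]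

theorem exists_cyclic_recurrence {σ : Fin (n + 1) → K} (hσ0 : ∀ i, σ i ≠ 0)
    (hσ : ∏ i, σ i = 1) : ∃ h : Fin (n + 1) → K, (∀ i, h i ≠ 0) ∧ ∀ i, h (i + 1) = σ i * h i := by
  refine ⟨fun i => ∏ j ∈ Finset.range i, σ j,
    fun i => Finset.prod_ne_zero_iff.mpr fun j _ => hσ0 j, fun i => ?_⟩
  simp only [Fin.val_add_one]
  split_ifs with hi
  · subst hi
    rw [Finset.prod_range_zero, ← hσ, Fin.prod_univ_castSucc, Fin.val_last,
      ← Fin.prod_univ_eq_prod_range, mul_comm]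
    congr 2 with j
    simp
  · rw [Finset.prod_range_succ, Fin.cast_val_eq_self, mul_comm]

variable {V : Type*} [DecidableEq V]

theorem sum_smul_single_sub_eq_zero_iff {v : Fin (n + 1) → V} (hv : Function.Injective v)
    (h σ : Fin (n + 1) → K) :
    ∑ i, h i • (Pi.single (v i) 1 - σ i • Pi.single (v (i + 1)) 1 : V → K) = 0 ↔
      ∀ i, h (i + 1) = σ i * h i := by
  have hshift : ∑ i, (h i * σ i) • (Pi.single (v (i + 1)) 1 : V → K) =
      ∑ i, (h (i - 1) * σ (i - 1)) • Pi.single (v i) 1 := by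
    rw [← (Equiv.subRight (1 : Fin (n + 1))).sum_comp]
    simp
  simp_rw [smul_sub, smul_smul, Finset.sum_sub_distrib, hshift, ← Finset.sum_sub_distrib,
    ← sub_smul]
  have hli := Fintype.linearIndependent_iff.mp ((Pi.linearIndependent_single_one V K).comp v hv)
  constructor
  · intro h0 i
    have := hli _ h0 (i + 1)
    rw [add_sub_cancel_right] at this
    linear_combination this
  · intro hrec
    refine Finset.sum_eq_zero fun i _ => ?_
    rw [mul_comm, ← hrec, sub_add_cancel, sub_self, zero_smul]

end CyclicRecurrence

theorem linearIndepOn_single_sub_single {V K : Type*} [DecidableEq V] [Field K] (W : Finset V)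
    (w₀ : V) :
    LinearIndepOn K (fun w => (Pi.single w 1 - Pi.single w₀ 1 : V → K)) ↑(W.erase w₀) := by
  rw [linearIndepOn_finset_iff]
  intro c hc u hu
  simpa [Finset.sum_apply, Pi.single_apply, Finset.ne_of_mem_erase hu, hu] using congrFun hc u

def edgeSign {Edge : Type} (sgn : Edge → Bool) (e : Edge) : ℚ := if sgn e then -1 else 1

theorem edgeSign_ne_zero {Edge : Type} (sgn : Edge → Bool) (e : Edge) : edgeSign sgn e ≠ 0 := by
  unfold edgeSign; split <;> norm_num

theorem prod_edgeSign_comp {Edge ι : Type} [DecidableEq Edge] [Fintype ι] (sgn : Edge → Bool)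
    {e : ι → Edge} (he : Function.Injective e) :
    ∏ i, edgeSign sgn (e i) = (-1) ^ ((Finset.univ.image e).filter fun f => sgn f).card := by
  rw [Finset.filter_image, Finset.card_image_of_injective _ he]
  simp [edgeSign, Finset.prod_ite]

namespace Multigraph

open scoped Classical

variable {V Edge : Type} (G : Multigraph V Edge)

noncomputable def verts [Fintype V] (S : Finset Edge) : Finset V := {w | ∃ f ∈ S, w ∈ G.ends f}

theorem mem_verts [Fintype V] {S : Finset Edge} {w : V} :
    w ∈ G.verts S ↔ ∃ f ∈ S, w ∈ G.ends f := by
  simp [verts]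

-- A loop counts as one edge at its vertex, so a single loop is not leafless.
def Leafless (S : Finset Edge) : Prop :=
  ∀ w f, f ∈ S → w ∈ G.ends f → ∃ g ∈ S, g ≠ f ∧ w ∈ G.ends g

/-- The column `δ a - σ(e) δ b` of `e` in the signed incidence matrix, for the orientation
`(a, b)` of `e` picked by `Quot.out`; another orientation only rescales it by `±1`. -/
noncomputable def incidence (sgn : Edge → Bool) (e : Edge) : V → ℚ :=
  Pi.single (G.ends e).out.1 1 - edgeSign sgn e • Pi.single (G.ends e).out.2 1

variable {G} (sgn : Edge → Bool)

theorem mem_ends_of_incidence_ne_zero {e : Edge} {w : V} (h : G.incidence sgn e w ≠ 0) :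
    w ∈ G.ends e := by
  contrapose! h
  have h1 : w ≠ (G.ends e).out.1 := fun hw => h (hw ▸ Sym2.out_fst_mem _)
  have h2 : w ≠ (G.ends e).out.2 := fun hw => h (hw ▸ Sym2.out_snd_mem _)
  simp [incidence, h1, h2]

theorem incidence_ne_zero {e : Edge} {w : V} (hw : w ∈ G.ends e)
    (hpos : (G.ends e).IsDiag → sgn e = true) : G.incidence sgn e w ≠ 0 := by
  have hab : G.ends e = s((G.ends e).out.1, (G.ends e).out.2) := (Quot.out_eq _).symm
  rw [hab, Sym2.mem_iff] at hw
  rw [hab, Sym2.mk_isDiag_iff] at hpos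
  simp only [incidence, Pi.sub_apply, Pi.smul_apply, Pi.single_apply, smul_eq_mul, edgeSign]
  by_cases hl : (G.ends e).out.1 = (G.ends e).out.2
  · have hw' : w = (G.ends e).out.1 := by rcases hw with h | h <;> [exact h; exact h.trans hl.symm]
    simp [hpos hl, ← hl, hw']
  · rcases hw with rfl | rfl
    · simp [hl]
    · simp [Ne.symm hl]
      split <;> norm_num

theorem exists_smul_incidence_eq {e : Edge} {x y : V} (h : G.ends e = s(x, y)) :
    ∃ u : ℚ, u ≠ 0 ∧ u • G.incidence sgn e = Pi.single x 1 - edgeSign sgn e • Pi.single y 1 := by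
  have hab : s((G.ends e).out.1, (G.ends e).out.2) = s(x, y) := (Quot.out_eq _).trans h
  rcases Sym2.eq_iff.mp hab with ⟨h1, h2⟩ | ⟨h1, h2⟩
  · exact ⟨1, one_ne_zero, by rw [one_smul, incidence, h1, h2]⟩
  · refine ⟨-edgeSign sgn e, neg_ne_zero.mpr (edgeSign_ne_zero sgn e), ?_⟩
    have hsq : edgeSign sgn e * edgeSign sgn e = 1 := by unfold edgeSign; split <;> norm_num
    rw [incidence, h1, h2, smul_sub, smul_smul, neg_mul, hsq, neg_smul, neg_smul, one_smul]
    abel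

theorem incidence_mem_span_single [Fintype V] {S : Finset Edge} {e : Edge} (he : e ∈ S) :
    G.incidence sgn e ∈
      Submodule.span ℚ ↑((G.verts S).image fun w => (Pi.single w 1 : V → ℚ)) := by
  have hmem : ∀ w ∈ G.ends e, (Pi.single w 1 : V → ℚ) ∈
      Submodule.span ℚ ↑((G.verts S).image fun w => (Pi.single w 1 : V → ℚ)) := fun w hw =>
    Submodule.subset_span (Finset.mem_coe.mpr
      (Finset.mem_image_of_mem _ ((G.mem_verts).mpr ⟨e, he, hw⟩)))
  exact Submodule.sub_mem _ (hmem _ (Sym2.out_fst_mem _))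
    (Submodule.smul_mem _ _ (hmem _ (Sym2.out_snd_mem _)))

end Multigraph

section Components

variable {V Edge : Type} [DecidableEq Edge] {G : Multigraph V Edge} {F : Finset Edge} {a f g : Edge}

theorem mem_component_iff : f ∈ Component G F a ↔ f ∈ F ∧ Linked G F a f := by
  classical
  exact Finset.mem_filter

theorem component_subset : Component G F a ⊆ F := fun _ hf => (mem_component_iff.mp hf).1

theorem mem_component_self (ha : a ∈ F) : a ∈ Component G F a :=
  mem_component_iff.mpr ⟨ha, .refl⟩

theorem mem_component_of_mem_ends {x : V} (hg : g ∈ Component G F a) (hf : f ∈ F)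
    (hxg : x ∈ G.ends g) (hxf : x ∈ G.ends f) : f ∈ Component G F a := by
  rw [mem_component_iff] at hg ⊢
  exact ⟨hf, hg.2.tail ⟨hg.1, hf, x, hxg, hxf⟩⟩

theorem linked_component (hf : f ∈ Component G F a) : Linked G (Component G F a) a f := by
  obtain ⟨-, hlink⟩ := mem_component_iff.mp hf
  induction hlink with
  | refl => exact .refl
  | @tail b c hab hbc ih =>
    obtain ⟨hb, hc, x, hxb, hxc⟩ := hbc
    have hbK : b ∈ Component G F a := mem_component_iff.mpr ⟨hb, hab⟩
    exact (ih hbK).tail ⟨hbK, mem_component_of_mem_ends hbK hc hxb hxc, x, hxb, hxc⟩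

theorem sum_component_smul_incidence_eq_zero (sgn : Edge → Bool) {c : Edge → ℚ}
    (hc : ∑ f ∈ F, c f • G.incidence sgn f = 0) (a : Edge) :
    ∑ f ∈ Component G F a, c f • G.incidence sgn f = 0 := by
  classical
  funext w
  have hc' := congrFun hc w
  simp only [Finset.sum_apply, Pi.smul_apply, smul_eq_mul, Pi.zero_apply] at hc' ⊢
  by_cases hw : ∃ g ∈ Component G F a, w ∈ G.ends g
  · obtain ⟨g, hg, hwg⟩ := hw
    rw [← hc']
    refine Finset.sum_subset component_subset fun f hf hfK => ?_
    by_contra hne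
    exact hfK (mem_component_of_mem_ends hg hf hwg
      (Multigraph.mem_ends_of_incidence_ne_zero sgn (right_ne_zero_of_mul hne)))
  · push Not at hw
    refine Finset.sum_eq_zero fun f hf => ?_
    by_contra hne
    exact hw f hf (Multigraph.mem_ends_of_incidence_ne_zero sgn (right_ne_zero_of_mul hne))

end Components

section Cycles

open scoped Classical

variable {V Edge : Type} [DecidableEq Edge] {G : Multigraph V Edge} {C : Finset Edge}

theorem isCycleSet_iff : IsCycleSet G C ↔ ∃ (n : ℕ) (e : Fin (n + 1) → Edge) (v : Fin (n + 1) → V),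
    Function.Injective e ∧ Function.Injective v ∧ Finset.univ.image e = C ∧
      ∀ i, G.ends (e i) = s(v i, v (i + 1)) := by
  have hsucc : ∀ {n : ℕ} (i : Fin (n + 1)), (⟨(i + 1) % (n + 1), Nat.mod_lt _ n.succ_pos⟩ :
      Fin (n + 1)) = i + 1 := fun i => by ext; simp [Fin.val_add]
  constructor
  · rintro ⟨m, hm, e, v, he, hv, hC, hends⟩
    obtain ⟨n, rfl⟩ : ∃ n, m = n + 1 := ⟨m - 1, by omega⟩
    exact ⟨n, e, v, he, hv, hC, fun i => by rw [hends, hsucc]⟩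
  · rintro ⟨n, e, v, he, hv, hC, hends⟩
    exact ⟨n + 1, n.succ_pos, e, v, he, hv, hC, fun i => by rw [hends, hsucc]⟩

theorem IsCycleSet.nonempty (hC : IsCycleSet G C) : C.Nonempty := by
  obtain ⟨n, e, -, -, -, rfl, -⟩ := isCycleSet_iff.mp hC
  exact Finset.univ_nonempty.image e

theorem isCycleSet_singleton {f : Edge} (hf : (G.ends f).IsDiag) : IsCycleSet G {f} := by
  have hinj {α : Type} (g : Fin 1 → α) : Function.Injective g := fun _ _ _ => Subsingleton.elim _ _
  exact isCycleSet_iff.mpr ⟨0, fun _ => f, fun _ => (G.ends f).diagElem hf, hinj _, hinj _,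
    by simp, fun _ => (Sym2.diag_diagElem hf).symm⟩

theorem IsCycleSet.one_lt_card_filter_mem_ends (hC : IsCycleSet G C)
    (hloop : ∀ f ∈ C, ¬ (G.ends f).IsDiag) {b : Edge} {x : V} (hb : b ∈ C) (hx : x ∈ G.ends b) :
    1 < (C.filter fun d => x ∈ G.ends d).card := by
  obtain ⟨n, e, v, he, -, rfl, hends⟩ := isCycleSet_iff.mp hC
  obtain ⟨i, -, rfl⟩ := Finset.mem_image.mp hb
  have hn : (1 : Fin (n + 1)) ≠ 0 := by
    intro h1
    apply hloop (e 0) (Finset.mem_image_of_mem e (Finset.mem_univ 0))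
    rw [hends, h1, zero_add, Sym2.mk_isDiag_iff]
  -- `x` is the vertex `v k`, which lies on both `e k` and `e (k - 1)`
  obtain ⟨k, rfl⟩ : ∃ k, x = v k := by
    rw [hends, Sym2.mem_iff] at hx
    exact hx.elim (fun h => ⟨i, h⟩) (fun h => ⟨i + 1, h⟩)
  refine Finset.one_lt_card.mpr ⟨e k, ?_, e (k - 1), ?_, fun h => hn ?_⟩
  · simp [hends]
  · simp [hends]
  · have := he h
    rw [eq_sub_iff_add_eq, add_eq_left] at this
    exact this

variable (sgn : Edge → Bool)

theorem IsCycleSet.linearIndepOn_incidence (hC : IsCycleSet G C) (hb : ¬ BalancedCycle sgn C) :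
    LinearIndepOn ℚ (G.incidence sgn) ↑C := by
  obtain ⟨n, e, v, he, hv, rfl, hends⟩ := isCycleSet_iff.mp hC
  choose u hu0 hu using fun i => Multigraph.exists_smul_incidence_eq sgn (hends i)
  rw [linearIndepOn_finset_iff]
  intro c hc f hf
  obtain ⟨i, -, rfl⟩ := Finset.mem_image.mp hf
  have hsum : ∑ i, (c (e i) / u i) • (Pi.single (v i) 1 -
      edgeSign sgn (e i) • Pi.single (v (i + 1)) 1 : V → ℚ) = 0 := by
    rw [Finset.sum_image he.injOn] at hc
    simp_rw [← hu, smul_smul, div_mul_cancel₀ _ (hu0 _)]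
    exact hc
  have hprod : ∏ i, edgeSign sgn (e i) ≠ 1 := by
    rw [prod_edgeSign_comp sgn he, (Nat.not_even_iff_odd.mp hb).neg_one_pow]
    norm_num
  have := congrFun (eq_zero_of_cyclic_recurrence
    ((sum_smul_single_sub_eq_zero_iff hv _ _).mp hsum) hprod) i
  simpa [hu0 i] using this

theorem IsCycleSet.incidence_mem_span (hC : IsCycleSet G C) (hb : BalancedCycle sgn C) {f : Edge}
    (hf : f ∈ C) : G.incidence sgn f ∈ Submodule.span ℚ (G.incidence sgn '' ↑(C.erase f)) := by
  obtain ⟨n, e, v, he, hv, rfl, hends⟩ := isCycleSet_iff.mp hC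
  choose u hu0 hu using fun i => Multigraph.exists_smul_incidence_eq sgn (hends i)
  obtain ⟨i, -, rfl⟩ := Finset.mem_image.mp hf
  obtain ⟨h, hh0, hrec⟩ := exists_cyclic_recurrence (fun i => edgeSign_ne_zero sgn (e i))
    (by rw [prod_edgeSign_comp sgn he, hb.neg_one_pow])
  have hsum := (sum_smul_single_sub_eq_zero_iff hv h _).mpr hrec
  simp_rw [← hu, smul_smul] at hsum
  have := mem_span_image_of_sum_eq_zero (v := G.incidence sgn ∘ e) hsum (Finset.mem_univ i)
    (mul_ne_zero (hh0 i) (hu0 i))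
  rwa [Set.image_comp, ← Finset.coe_image, Finset.image_erase he] at this

end Cycles

namespace Multigraph

variable {V Edge : Type} {G : Multigraph V Edge} {e : ℕ → Edge} {v : ℕ → V} {k : ℕ}

variable (G) in
def IsPath (k : ℕ) (e : ℕ → Edge) (v : ℕ → V) : Prop :=
  (∀ i < k, G.ends (e i) = s(v i, v (i + 1))) ∧ Set.InjOn v (Set.Iic k)

theorem IsPath.eq_or_eq_succ_of_mem_ends (hp : G.IsPath k e v) {i j : ℕ} (hi : i < k) (hj : j ≤ k)
    (hvj : v j ∈ G.ends (e i)) : j = i ∨ j = i + 1 := by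
  rw [hp.1 i hi, Sym2.mem_iff] at hvj
  refine hvj.imp (fun h => hp.2 ?_ ?_ h) (fun h => hp.2 ?_ ?_ h) <;> simp <;> omega

theorem IsPath.exists_isCycleSet [DecidableEq Edge] (hp : G.IsPath k e v) {j : ℕ} (hjk : j ≤ k)
    {f : Edge} (hf : G.ends f = s(v k, v j)) (hfe : ∀ i < k, e i ≠ f) :
    ∃ C, (∀ g ∈ C, g = f ∨ ∃ i < k, e i = g) ∧ IsCycleSet G C := by
  obtain ⟨n, rfl⟩ := Nat.exists_eq_add_of_le hjk
  have hinj : ∀ a < j + n, ∀ b < j + n, e a = e b → a = b := by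
    intro a ha b hb hab
    have h1 := hp.eq_or_eq_succ_of_mem_ends hb ha.le (hab ▸ (hp.1 a ha).symm ▸ Sym2.mem_mk_left _ _)
    have h2 := hp.eq_or_eq_succ_of_mem_ends hb ha (hab ▸ (hp.1 a ha).symm ▸ Sym2.mem_mk_right _ _)
    omega
  refine ⟨Finset.univ.image fun i : Fin (n + 1) => if (i : ℕ) < n then e (j + i) else f,
    fun g hg => ?_, isCycleSet_iff.mpr ⟨n, fun i => if (i : ℕ) < n then e (j + i) else f,
      fun i => v (j + i), fun a b hab => ?_, fun a b hab => ?_, rfl, fun i => ?_⟩⟩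
  · obtain ⟨i, -, rfl⟩ := Finset.mem_image.mp hg
    split_ifs with hi
    · exact Or.inr ⟨j + i, by omega, rfl⟩
    · exact Or.inl rfl
  · simp only at hab
    split_ifs at hab with ha hb hb
    · exact Fin.ext (by have := hinj _ (by omega) _ (by omega) hab; omega)
    · exact absurd hab (hfe _ (by omega))
    · exact absurd hab.symm (hfe _ (by omega))
    · exact Fin.ext (by omega)
  · exact Fin.ext (by have := hp.2 (by simp; omega) (by simp; omega) hab; omega)
  · simp only
    by_cases hi : (i : ℕ) < n
    · rw [if_pos hi, hp.1 _ (by omega), Fin.val_add_one_of_lt (Fin.lt_last_iff_ne_last.mpr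
        fun h => by simp [h] at hi), Nat.add_assoc]
    · have hlast : i = Fin.last n := Fin.ext (by have := i.2; simp; omega)
      subst hlast
      simp [hf]

theorem Leafless.exists_isPath_succ [DecidableEq Edge] {S : Finset Edge} (hS : G.Leafless S)
    (hacyc : ∀ C ⊆ S, ¬ IsCycleSet G C) (hp : G.IsPath k e v) (heS : ∀ i < k, e i ∈ S)
    (hvk : ∃ f ∈ S, v k ∈ G.ends f) :
    ∃ e' v', G.IsPath (k + 1) e' v' ∧ (∀ i < k + 1, e' i ∈ S) ∧ ∃ f ∈ S, v' (k + 1) ∈ G.ends f := by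
  obtain ⟨f, hfS, hvf, hfe⟩ : ∃ f ∈ S, v k ∈ G.ends f ∧ ∀ i < k, e i ≠ f := by
    cases k with
    | zero => simpa using hvk
    | succ k =>
      obtain ⟨g, hgS, hgk, hvg⟩ := hS _ _ (heS k (by omega))
        ((hp.1 k (by omega)).symm ▸ Sym2.mem_mk_right _ _)
      refine ⟨g, hgS, hvg, fun i hi hig => ?_⟩
      have := hp.eq_or_eq_succ_of_mem_ends hi le_rfl (hig ▸ hvg)
      exact hgk (by rw [← hig]; congr 1; omega)
  obtain ⟨x, hx⟩ := Sym2.mem_iff_exists.mp hvf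
  by_cases hxv : ∃ j ≤ k, v j = x
  · obtain ⟨j, hjk, rfl⟩ := hxv
    obtain ⟨C, hCsub, hC⟩ := hp.exists_isCycleSet hjk hx hfe
    refine (hacyc C (fun g hg => ?_) hC).elim
    obtain rfl | ⟨i, hi, rfl⟩ := hCsub g hg
    exacts [hfS, heS i hi]
  push Not at hxv
  refine ⟨fun i => if i < k then e i else f, fun i => if i ≤ k then v i else x,
    ⟨fun i hi => ?_, fun a ha b hb hab => ?_⟩, fun i hi => ?_, f, hfS, by simp [hx]⟩
  · by_cases hik : i < k
    · simp [hik, hik.le, Nat.succ_le_of_lt hik, hp.1 i hik]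
    · simp [show i = k by omega, hx]
  · simp only [Set.mem_Iic] at ha hb
    simp only at hab
    split_ifs at hab with h1 h2 h2
    · exact hp.2 h1 h2 hab
    · exact absurd hab (hxv a h1)
    · exact absurd hab.symm (hxv b h2)
    · omega
  · by_cases hik : i < k
    · simp [hik, heS i hik]
    · simp [hik, hfS]

theorem Leafless.exists_isCycleSet [Fintype V] [DecidableEq Edge] {S : Finset Edge}
    (hS : G.Leafless S) (hne : S.Nonempty) : ∃ C ⊆ S, IsCycleSet G C := by
  by_contra! hacyc
  -- without cycles, paths in `S` can be extended forever
  have hpath : ∀ k, ∃ e v, G.IsPath k e v ∧ (∀ i < k, e i ∈ S) ∧ ∃ f ∈ S, v k ∈ G.ends f := by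
    intro k
    induction k with
    | zero =>
      obtain ⟨f, hf⟩ := hne
      exact ⟨fun _ => f, fun _ => (G.ends f).out.1, ⟨by simp, fun a ha b hb _ => by simp_all⟩,
        by simp, f, hf, Sym2.out_fst_mem _⟩
    | succ k ih =>
      obtain ⟨e, v, hp, heS, hvk⟩ := ih
      exact hS.exists_isPath_succ hacyc hp heS hvk
  obtain ⟨e, v, hp, -⟩ := hpath (Fintype.card V)
  have := Finset.card_le_card_of_injOn v (s := Finset.range (Fintype.card V + 1))
    (t := Finset.univ) (fun _ _ => Finset.mem_coe.mpr (Finset.mem_univ _))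
    (hp.2.mono fun i hi => by simp at hi ⊢; omega)
  simp at this

end Multigraph

namespace Multigraph

open scoped Classical

variable {V Edge : Type} {G : Multigraph V Edge}

theorem leafless_filter_of_sum_smul_incidence_eq_zero (sgn : Edge → Bool) {S : Finset Edge}
    {c : Edge → ℚ} (hc : ∑ f ∈ S, c f • G.incidence sgn f = 0)
    (hloop : ∀ f ∈ S, (G.ends f).IsDiag → sgn f = true) : G.Leafless (S.filter (c · ≠ 0)) := by
  intro w f hf hw
  by_contra! hno
  have hw0 := congrFun hc w
  rw [← Finset.sum_filter_of_ne (p := (c · ≠ 0)) fun g _ h => left_ne_zero_of_smul h,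
    Finset.sum_apply, Finset.sum_eq_single f (fun g hg hgf => ?_) (absurd hf)] at hw0
  · rw [Finset.mem_filter] at hf
    exact mul_ne_zero hf.2 (incidence_ne_zero sgn hw (hloop f hf.1)) hw0
  · by_contra hne
    exact hno g hg hgf (mem_ends_of_incidence_ne_zero sgn (right_ne_zero_of_mul hne))

theorem single_sub_single_mem_span_incidence {K : Finset Edge} {f : Edge} (hf : f ∈ K) {y z : V}
    (hy : y ∈ G.ends f) (hz : z ∈ G.ends f) :
    (Pi.single y 1 - Pi.single z 1 : V → ℚ) ∈
      Submodule.span ℚ (G.incidence (fun _ => false) '' ↑K) := by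
  by_cases hyz : y = z
  · simp [hyz]
  obtain ⟨u, hu0, hu⟩ := exists_smul_incidence_eq (fun _ => false)
    ((Sym2.mem_and_mem_iff hyz).mp ⟨hy, hz⟩)
  rw [edgeSign, if_neg Bool.false_ne_true, one_smul] at hu
  exact hu ▸ Submodule.smul_mem _ _ (Submodule.subset_span (Set.mem_image_of_mem _ hf))

theorem single_sub_single_mem_span_of_linked {K : Finset Edge} {e f : Edge} (he : e ∈ K)
    (hlink : Linked G K e f) {w₀ z : V} (hw₀ : w₀ ∈ G.ends e) (hz : z ∈ G.ends f) :
    (Pi.single z 1 - Pi.single w₀ 1 : V → ℚ) ∈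
      Submodule.span ℚ (G.incidence (fun _ => false) '' ↑K) := by
  induction hlink generalizing z with
  | refl => exact single_sub_single_mem_span_incidence he hz hw₀
  | tail _ hbc ih =>
    obtain ⟨-, hc, x, hxb, hxc⟩ := hbc
    rw [← sub_add_sub_cancel _ (Pi.single x 1)]
    exact Submodule.add_mem _ (single_sub_single_mem_span_incidence hc hz hxc) (ih hxb)

theorem card_le_card_verts_of_linearIndepOn [Fintype V] (sgn : Edge → Bool) {S : Finset Edge}
    (hS : LinearIndepOn ℚ (G.incidence sgn) ↑S) : S.card ≤ (G.verts S).card :=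
  (hS.card_le_card_of_subset_span fun _ hf => incidence_mem_span_single sgn hf).trans
    Finset.card_image_le

theorem incidence_mem_span_single_sub_single [Fintype V] {S : Finset Edge} {f : Edge}
    (hf : f ∈ S) (w₀ : V) :
    G.incidence (fun _ => false) f ∈ Submodule.span ℚ
      ↑(((G.verts S).erase w₀).image fun w => (Pi.single w 1 - Pi.single w₀ 1 : V → ℚ)) := by
  have hmem : ∀ w ∈ G.ends f, (Pi.single w 1 - Pi.single w₀ 1 : V → ℚ) ∈ Submodule.span ℚ
      ↑(((G.verts S).erase w₀).image fun w => (Pi.single w 1 - Pi.single w₀ 1 : V → ℚ)) := by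
    intro w hw
    by_cases hww : w = w₀
    · simp [hww]
    · exact Submodule.subset_span (Finset.mem_coe.mpr (Finset.mem_image_of_mem _
        (Finset.mem_erase.mpr ⟨hww, G.mem_verts.mpr ⟨f, hf, hw⟩⟩)))
  have hinc : G.incidence (fun _ => false) f = (Pi.single (G.ends f).out.1 1 - Pi.single w₀ 1) -
      (Pi.single (G.ends f).out.2 1 - Pi.single w₀ 1) := by
    simp [incidence, edgeSign]
  rw [hinc]
  exact Submodule.sub_mem _ (hmem _ (Sym2.out_fst_mem _)) (hmem _ (Sym2.out_snd_mem _))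

theorem Leafless.degree_eq_two [Fintype V] {S : Finset Edge} (hS : G.Leafless S)
    (hcard : S.card ≤ (G.verts S).card) :
    (∀ w ∈ G.verts S, (S.filter fun f => w ∈ G.ends f).card = 2) ∧
      ∀ f ∈ S, ¬ (G.ends f).IsDiag := by
  set W := G.verts S
  have hdeg : ∀ w ∈ W, 2 ≤ (S.filter fun f => w ∈ G.ends f).card := by
    intro w hw
    obtain ⟨f, hf, hwf⟩ := G.mem_verts.mp hw
    obtain ⟨g, hg, hgf, hwg⟩ := hS w f hf hwf
    exact Finset.one_lt_card.mpr ⟨f, by simp [hf, hwf], g, by simp [hg, hwg], hgf.symm⟩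
  have hends : ∀ f ∈ S,
      (W.filter fun w => w ∈ G.ends f).card ≤ if (G.ends f).IsDiag then 1 else 2 :=
    fun f _ => (Sym2.card_toFinset (G.ends f)) ▸ Finset.card_le_card fun w hw =>
      Sym2.mem_toFinset.mpr (Finset.mem_filter.mp hw).2
  have hends2 : ∀ f ∈ S, (W.filter fun w => w ∈ G.ends f).card ≤ 2 := fun f hf =>
    (hends f hf).trans (by split <;> norm_num)
  have hsum := Finset.sum_card_bipartiteAbove_eq_sum_card_bipartiteBelow
    (fun w f => w ∈ G.ends f) (s := W) (t := S)
  simp only [Finset.bipartiteAbove, Finset.bipartiteBelow] at hsum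
  have h₁ := Finset.sum_le_sum hdeg
  have h₂ := Finset.sum_le_sum hends2
  have hW : ∑ _w ∈ W, 2 = W.card * 2 := by simp
  have hS2 : ∑ _f ∈ S, 2 = S.card * 2 := by simp
  refine ⟨fun w hw => ?_, fun f hf hdiag => ?_⟩
  · exact ((Finset.sum_eq_sum_iff_of_le hdeg).mp (by omega) w hw).symm
  · have := (Finset.sum_eq_sum_iff_of_le hends2).mp (by omega) f hf
    have := hends f hf
    simp only [hdiag, if_true] at this
    omega

theorem incidence_mem_span_erase_erase [DecidableEq Edge] {K C₁ C₂ : Finset Edge} (h₁ : C₁ ⊆ K)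
    (h₂ : C₂ ⊆ K) (hC₁ : IsCycleSet G C₁) (hC₂ : IsCycleSet G C₂) {g₁ g₂ : Edge} (hg₁ : g₁ ∈ C₁)
    (hg₁₂ : g₁ ∉ C₂) (hg₂ : g₂ ∈ C₂) {f : Edge} (hf : f ∈ K) :
    G.incidence (fun _ => false) f ∈
      Submodule.span ℚ (G.incidence (fun _ => false) '' ↑((K.erase g₁).erase g₂)) := by
  have hbal : ∀ C, BalancedCycle (fun _ : Edge => false) C := by simp [BalancedCycle]
  have hK₁ : ∀ f ∈ K.erase g₁, G.incidence (fun _ => false) f ∈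
      Submodule.span ℚ (G.incidence (fun _ => false) '' ↑((K.erase g₁).erase g₂)) := by
    intro f hf
    by_cases hf₂ : f = g₂
    · subst hf₂
      refine Submodule.span_mono (Set.image_mono fun x hx => ?_)
        (hC₂.incidence_mem_span _ (hbal C₂) hg₂)
      obtain ⟨hx₂, hxC⟩ := Finset.mem_erase.mp hx
      exact Finset.mem_erase.mpr ⟨hx₂, Finset.mem_erase.mpr ⟨fun h => hg₁₂ (h ▸ hxC), h₂ hxC⟩⟩
    · exact Submodule.subset_span (Set.mem_image_of_mem _ (Finset.mem_erase.mpr ⟨hf₂, hf⟩))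
  by_cases hf₁ : f = g₁
  · subst hf₁
    refine Submodule.span_le.mpr ?_ (hC₁.incidence_mem_span _ (hbal C₁) hg₁)
    rintro _ ⟨x, hx, rfl⟩
    obtain ⟨hx₁, hxC⟩ := Finset.mem_erase.mp hx
    exact hK₁ x (Finset.mem_erase.mpr ⟨hx₁, h₁ hxC⟩)
  · exact hK₁ f (Finset.mem_erase.mpr ⟨hf₁, hf⟩)

variable [Fintype V] [DecidableEq Edge]

theorem linearIndepOn_incidence_of_acyclic (sgn : Edge → Bool) {S : Finset Edge}
    (hS : ∀ C ⊆ S, ¬ IsCycleSet G C) : LinearIndepOn ℚ (G.incidence sgn) ↑S := by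
  rw [linearIndepOn_finset_iff]
  intro c hc f hf
  by_contra hcf
  have hloop : ∀ g ∈ S, (G.ends g).IsDiag → sgn g = true := fun g hg hl =>
    absurd (isCycleSet_singleton hl) (hS _ (Finset.singleton_subset_iff.mpr hg))
  obtain ⟨C, hCS, hC⟩ := (leafless_filter_of_sum_smul_incidence_eq_zero sgn hc
    hloop).exists_isCycleSet ⟨f, Finset.mem_filter.mpr ⟨hf, hcf⟩⟩
  exact hS C (hCS.trans (Finset.filter_subset _ _)) hC

theorem card_verts_lt_card_of_two_cycles {K : Finset Edge} {e : Edge} (he : e ∈ K)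
    (hconn : ∀ f ∈ K, Linked G K e f) {C₁ C₂ : Finset Edge} (h₁ : C₁ ⊆ K) (h₂ : C₂ ⊆ K)
    (hC₁ : IsCycleSet G C₁) (hC₂ : IsCycleSet G C₂) (hne : C₁ ≠ C₂) :
    (G.verts K).card < K.card := by
  wlog h : ¬ C₁ ⊆ C₂ generalizing C₁ C₂
  · exact this h₂ h₁ hC₂ hC₁ hne.symm fun h' => hne (Finset.Subset.antisymm (not_not.mp h) h')
  obtain ⟨g₁, hg₁, hg₁₂⟩ := Finset.not_subset.mp h
  obtain ⟨g₂, hg₂⟩ := hC₂.nonempty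
  have hg : g₂ ≠ g₁ := fun h => hg₁₂ (h ▸ hg₂)
  set w₀ := (G.ends e).out.1
  have hstar : ∀ w ∈ (G.verts K).erase w₀, (Pi.single w 1 - Pi.single w₀ 1 : V → ℚ) ∈
      Submodule.span ℚ ↑(((K.erase g₁).erase g₂).image (G.incidence fun _ => false)) := by
    intro w hw
    obtain ⟨f, hf, hwf⟩ := G.mem_verts.mp (Finset.mem_of_mem_erase hw)
    rw [Finset.coe_image]
    refine Submodule.span_le.mpr ?_
      (single_sub_single_mem_span_of_linked he (hconn f hf) (Sym2.out_fst_mem _) hwf)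
    rintro _ ⟨x, hx, rfl⟩
    exact incidence_mem_span_erase_erase h₁ h₂ hC₁ hC₂ hg₁ hg₁₂ hg₂ hx
  have hcard := ((linearIndepOn_single_sub_single (K := ℚ) (G.verts K)
    w₀).card_le_card_of_subset_span hstar).trans Finset.card_image_le
  have hw₀ : w₀ ∈ G.verts K := G.mem_verts.mpr ⟨e, he, Sym2.out_fst_mem _⟩
  rw [Finset.card_erase_of_mem hw₀, Finset.card_erase_of_mem (Finset.mem_erase.mpr
    ⟨hg, h₂ hg₂⟩), Finset.card_erase_of_mem (h₁ hg₁)] at hcard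
  have : 2 ≤ K.card := Finset.one_lt_card.mpr ⟨g₁, h₁ hg₁, g₂, h₂ hg₂, hg.symm⟩
  omega

theorem card_le_card_verts_of_forall_isCycleSet_eq {S C : Finset Edge} (hCS : C ⊆ S)
    (hC : IsCycleSet G C) (huniq : ∀ C' ⊆ S, IsCycleSet G C' → C' = C) :
    S.card ≤ (G.verts S).card := by
  obtain ⟨g, hg⟩ := hC.nonempty
  have hacyc : ∀ C' ⊆ S.erase g, ¬ IsCycleSet G C' := fun C' hC'S hC' =>
    Finset.notMem_erase g S (hC'S (huniq C' (hC'S.trans (Finset.erase_subset g S)) hC' ▸ hg))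
  have hw₀ : (G.ends g).out.1 ∈ G.verts S := G.mem_verts.mpr ⟨g, hCS hg, Sym2.out_fst_mem _⟩
  have hcard := ((linearIndepOn_incidence_of_acyclic _ hacyc).card_le_card_of_subset_span
    fun f hf => incidence_mem_span_single_sub_single (Finset.mem_of_mem_erase hf)
      (G.ends g).out.1).trans Finset.card_image_le
  rw [Finset.card_erase_of_mem (hCS hg), Finset.card_erase_of_mem hw₀] at hcard
  have : 0 < (G.verts S).card := Finset.card_pos.mpr ⟨_, hw₀⟩
  omega

theorem Leafless.isCycleSet {S C : Finset Edge} (hS : G.Leafless S) (hCS : C ⊆ S)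
    (hC : IsCycleSet G C) (huniq : ∀ C' ⊆ S, IsCycleSet G C' → C' = C) : IsCycleSet G S := by
  obtain ⟨hdeg, hloop⟩ := hS.degree_eq_two (card_le_card_verts_of_forall_isCycleSet_eq hCS hC huniq)
  suffices hSC : S ⊆ C from Finset.Subset.antisymm hSC hCS ▸ hC
  by_contra hSC
  -- the vertices of `C` have both their edges in `C`, so `S \ C` is leafless as well
  have hleaf : G.Leafless (S \ C) := by
    intro w f hf hw
    obtain ⟨hfS, hfC⟩ := Finset.mem_sdiff.mp hf
    obtain ⟨g, hgS, hgf, hwg⟩ := hS w f hfS hw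
    refine ⟨g, Finset.mem_sdiff.mpr ⟨hgS, fun hgC => ?_⟩, hgf, hwg⟩
    have h2 := hC.one_lt_card_filter_mem_ends (fun d hd => hloop d (hCS hd)) hgC hwg
    have h3 : insert f (C.filter fun d => w ∈ G.ends d) ⊆ S.filter fun d => w ∈ G.ends d :=
      Finset.insert_subset (Finset.mem_filter.mpr ⟨hfS, hw⟩) (Finset.filter_subset_filter _ hCS)
    have := Finset.card_le_card h3
    rw [Finset.card_insert_of_notMem (fun h => hfC (Finset.mem_filter.mp h).1),
      hdeg w (G.mem_verts.mpr ⟨f, hfS, hw⟩)] at this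
    omega
  obtain ⟨C', hC'S, hC'⟩ := hleaf.exists_isCycleSet (Finset.sdiff_nonempty.mpr hSC)
  obtain rfl := huniq C' (hC'S.trans Finset.sdiff_subset) hC'
  obtain ⟨g, hg⟩ := hC.nonempty
  exact (Finset.mem_sdiff.mp (hC'S hg)).2 hg

theorem linearIndepOn_incidence_of_forall_isCycleSet (sgn : Edge → Bool) {K : Finset Edge}
    (huniq : ∀ C₁ ⊆ K, ∀ C₂ ⊆ K, IsCycleSet G C₁ → IsCycleSet G C₂ → C₁ = C₂)
    (hunbal : ∀ C ⊆ K, IsCycleSet G C → ¬ BalancedCycle sgn C) :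
    LinearIndepOn ℚ (G.incidence sgn) ↑K := by
  rw [linearIndepOn_finset_iff]
  intro c hc f hf
  by_contra hcf
  set T := K.filter (c · ≠ 0)
  have hTK : T ⊆ K := Finset.filter_subset _ _
  have hloop : ∀ g ∈ K, (G.ends g).IsDiag → sgn g = true := by
    intro g hg hl
    by_contra hsg
    refine hunbal {g} (Finset.singleton_subset_iff.mpr hg) (isCycleSet_singleton hl) ?_
    simp [BalancedCycle, Finset.filter_singleton, hsg]
  have hleaf := leafless_filter_of_sum_smul_incidence_eq_zero sgn hc hloop
  obtain ⟨C, hCT, hC⟩ := hleaf.exists_isCycleSet ⟨f, Finset.mem_filter.mpr ⟨hf, hcf⟩⟩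
  have hT := hleaf.isCycleSet hCT hC fun C' hC'T hC' =>
    huniq C' (hC'T.trans hTK) C (hCT.trans hTK) hC' hC
  have hTli := linearIndepOn_finset_iff.mp (hT.linearIndepOn_incidence sgn (hunbal T hTK hT)) c
    (by rw [Finset.sum_filter_of_ne fun g _ h => left_ne_zero_of_smul h]; exact hc)
  exact hcf (hTli f (Finset.mem_filter.mpr ⟨hf, hcf⟩))

theorem sgnIndep_of_linearIndepOn_incidence (sgn : Edge → Bool) {I : Finset Edge}
    (hI : LinearIndepOn ℚ (G.incidence sgn) ↑I) : SgnIndep G sgn I := by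
  intro e he
  have hK := hI.mono (Finset.coe_subset.mpr (component_subset (G := G) (a := e)))
  by_cases hcyc : ∃ C ⊆ Component G I e, IsCycleSet G C
  · obtain ⟨C₁, h₁, hC₁⟩ := hcyc
    refine Or.inr ⟨⟨C₁, ⟨h₁, hC₁⟩, fun C₂ ⟨h₂, hC₂⟩ => by_contra fun hne => ?_⟩,
      fun C hC hCyc hbal => ?_⟩
    · exact absurd (card_le_card_verts_of_linearIndepOn sgn hK) (not_le.mpr
        (card_verts_lt_card_of_two_cycles (mem_component_self he)
          (fun f hf => linked_component hf) h₂ h₁ hC₂ hC₁ hne))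
    · obtain ⟨g, hg⟩ := hCyc.nonempty
      exact (linearIndepOn_iff_notMem_span.mp (hK.mono (Finset.coe_subset.mpr hC)) g hg)
        (by simpa [Finset.coe_erase] using hCyc.incidence_mem_span sgn hbal hg)
  · push Not at hcyc
    exact Or.inl hcyc

theorem linearIndepOn_incidence_of_sgnIndep (sgn : Edge → Bool) {I : Finset Edge}
    (hI : SgnIndep G sgn I) : LinearIndepOn ℚ (G.incidence sgn) ↑I := by
  rw [linearIndepOn_finset_iff]
  intro c hc e he
  have hK : LinearIndepOn ℚ (G.incidence sgn) ↑(Component G I e) := by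
    rcases hI e he with hacyc | ⟨⟨C, -, hC⟩, hunbal⟩
    · exact linearIndepOn_incidence_of_forall_isCycleSet sgn
        (fun C₁ h₁ _ _ hC₁ _ => absurd hC₁ (hacyc C₁ h₁)) fun C h hC => absurd hC (hacyc C h)
    · exact linearIndepOn_incidence_of_forall_isCycleSet sgn
        (fun C₁ h₁ C₂ h₂ hC₁ hC₂ => (hC C₁ ⟨h₁, hC₁⟩).trans (hC C₂ ⟨h₂, hC₂⟩).symm) hunbal
  exact linearIndepOn_finset_iff.mp hK c (sum_component_smul_incidence_eq_zero sgn hc e) e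
    (mem_component_self he)

end Multigraph

theorem signed_graph_matroid_general {V Edge : Type} [Fintype V]
    [DecidableEq Edge] (G : Multigraph V Edge) (sgn : Edge → Bool) :
    ∃ M : Matroid Edge, M.E = Set.univ ∧
      (∀ I : Finset Edge, M.Indep ↑I ↔ SgnIndep G sgn I) ∧
      ∀ B : Finset Edge, M.IsBase ↑B → B.card ≤ Fintype.card V := by
  refine ⟨linearMatroid ℚ (G.incidence sgn), linearMatroid_E _, fun I => ?_, fun B hB => ?_⟩
  · exact ⟨Multigraph.sgnIndep_of_linearIndepOn_incidence sgn,
      Multigraph.linearIndepOn_incidence_of_sgnIndep sgn⟩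
  · have hli : LinearIndependent ℚ fun f : ↥(B : Set Edge) => G.incidence sgn f :=
      linearMatroid_indep_iff.mp hB.indep
    simpa using hli.fintype_card_le_finrank

/-- Zaslavsky: in a signed graph, the edge sets all of whose
components are trees or unicyclic with unbalanced unique cycle are the
independent sets of a matroid, and every base has at most `|V|` elements. -/
theorem signed_graph_matroid {V Edge : Type} [Fintype V] [Fintype Edge]
    [DecidableEq Edge] (G : Multigraph V Edge) (sgn : Edge → Bool) :
    ∃ M : Matroid Edge, M.E = Set.univ ∧
      (∀ I : Finset Edge, M.Indep ↑I ↔ SgnIndep G sgn I) ∧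
      ∀ B : Finset Edge, M.IsBase ↑B → B.card ≤ Fintype.card V :=
  signed_graph_matroid_general G sgn
end
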